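/- In the non-compliance SCM, the probability of positive outcome under prescription decomposes as: P(Y = 1 | do(P := 1), X = x) = P(Y = 1 | X = x, T = 0) + ITE(x)·γ(x), where ITE(x) = P(Y=1 | do(T:=1), X=x) − P(Y=1 | do(T:=0), X=x) and γ(x) = P(T = 1 | do(P := 1), X = x). -/

import Mathlib

/-! The noises `(N_U, N_X, N_Y)` are independent of `(P, N_T)`, so given `X = x` the potential
outcomes `fY x t U N_Y` are independent of prescription and compliance. Put
`b t = P(X = x, fY x t U N_Y = 1)`, `q = P(fT x N_T = 1)` and `c = P(fT x N_T && P = 0)`.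
Then the prescribed outcome has numerator `b 1 * q + b 0 * (1 - q)`, the observed outcome
among the untreated is `b 0 * c / (P(X = x) * c)`, `γ(x) = q`, and the identity is algebra. -/

open Classical Finset

/-- Probability of an event in a finite probability space given by a mass function. -/
noncomputable def Pr {Ω : Type*} [Fintype Ω] (pr : Ω → ℝ) (A : Ω → Prop) : ℝ :=
  ∑ ω, if A ω then pr ω else 0

/-- Conditional probability `P(A | B)`. -/
noncomputable def cPr {Ω : Type*} [Fintype Ω] (pr : Ω → ℝ) (A B : Ω → Prop) : ℝ :=
  Pr pr (fun ω => A ω ∧ B ω) / Pr pr B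

section Pr

variable {Ω : Type*} [Fintype Ω] (pr : Ω → ℝ)

lemma Pr_congr {A B : Ω → Prop} (h : ∀ ω, A ω ↔ B ω) : Pr pr A = Pr pr B := by
  simp only [Pr, h]

lemma Pr_true (hsum : ∑ ω, pr ω = 1) : Pr pr (fun _ => True) = 1 := by
  simpa [Pr] using hsum

lemma Pr_eq_Pr_and_add_Pr_and_not (A B : Ω → Prop) :
    Pr pr A = Pr pr (fun ω => A ω ∧ B ω) + Pr pr (fun ω => A ω ∧ ¬B ω) := by
  simp only [Pr, ← sum_add_distrib]
  refine sum_congr rfl fun ω _ => ?_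
  by_cases hA : A ω <;> by_cases hB : B ω <;> simp [hA, hB]

lemma Pr_not (hsum : ∑ ω, pr ω = 1) (B : Ω → Prop) :
    Pr pr (fun ω => ¬B ω) = 1 - Pr pr B := by
  have h := Pr_eq_Pr_and_add_Pr_and_not pr (fun _ => True) B
  simp only [true_and, Pr_true pr hsum] at h
  linarith

lemma Pr_and_eq_ite {A B : Ω → Prop} {p : Prop} [Decidable p] (h : ∀ ω, B ω → (A ω ↔ p)) :
    Pr pr (fun ω => A ω ∧ B ω) = if p then Pr pr B else 0 := by
  unfold Pr
  split_ifs with hp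
  · refine sum_congr rfl fun ω _ => ?_
    by_cases hB : B ω <;> simp [hB, h ω, hp]
  · refine sum_eq_zero fun ω _ => ?_
    by_cases hB : B ω <;> simp [hB, h ω, hp]

lemma Pr_eq_sum_Pr_and {α : Type*} (V : Ω → α) {s : Finset α} (hs : ∀ ω, V ω ∈ s)
    (A : Ω → Prop) : Pr pr A = ∑ a ∈ s, Pr pr (fun ω => A ω ∧ V ω = a) := by
  simp only [Pr]
  rw [sum_comm]
  refine sum_congr rfl fun ω _ => ?_
  simp only [and_comm (a := A ω), ite_and]
  rw [sum_ite_eq, if_pos (hs ω)]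

lemma Pr_and_comp_eq_mul {α β : Type*} (V : Ω → α) (W : Ω → β)
    (hVW : ∀ a b, Pr pr (fun ω => V ω = a ∧ W ω = b)
      = Pr pr (fun ω => V ω = a) * Pr pr (fun ω => W ω = b))
    (g : α → Prop) (h : β → Prop) :
    Pr pr (fun ω => g (V ω) ∧ h (W ω))
      = Pr pr (fun ω => g (V ω)) * Pr pr (fun ω => h (W ω)) := by
  have hV : ∀ ω, V ω ∈ univ.image V := fun ω => mem_image_of_mem V (mem_univ ω)
  have hW : ∀ ω, W ω ∈ univ.image W := fun ω => mem_image_of_mem W (mem_univ ω)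
  rw [Pr_eq_sum_Pr_and pr V hV, Pr_eq_sum_Pr_and pr V hV, Pr_eq_sum_Pr_and pr W hW, sum_mul_sum]
  refine sum_congr rfl fun a _ => ?_
  rw [Pr_eq_sum_Pr_and pr W hW]
  refine sum_congr rfl fun b _ => ?_
  have hg : Pr pr (fun ω => g (V ω) ∧ V ω = a) = if g a then Pr pr (fun ω => V ω = a) else 0 :=
    Pr_and_eq_ite pr fun ω hω => by rw [hω]
  have hh : Pr pr (fun ω => h (W ω) ∧ W ω = b) = if h b then Pr pr (fun ω => W ω = b) else 0 :=
    Pr_and_eq_ite pr fun ω hω => by rw [hω]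
  have hgh : Pr pr (fun ω => ((g (V ω) ∧ h (W ω)) ∧ V ω = a) ∧ W ω = b)
      = if g a ∧ h b then Pr pr (fun ω => V ω = a ∧ W ω = b) else 0 :=
    (Pr_congr pr fun ω => and_assoc).trans
      (Pr_and_eq_ite pr (A := fun ω => g (V ω) ∧ h (W ω)) fun ω hω => by rw [hω.1, hω.2])
  rw [hg, hh, hgh, hVW]
  by_cases hga : g a <;> by_cases hhb : h b <;> simp [hga, hhb]

-- `p` and `q` need not be the marginals: `hsum` forces their total masses to multiply to one.
lemma Pr_and_eq_mul_of_eq_mul (hsum : ∑ ω, pr ω = 1) {α β : Type*} (V : Ω → α) (W : Ω → β)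
    (p : α → ℝ) (q : β → ℝ) (hpq : ∀ a b, Pr pr (fun ω => V ω = a ∧ W ω = b) = p a * q b)
    (a : α) (b : β) :
    Pr pr (fun ω => V ω = a ∧ W ω = b)
      = Pr pr (fun ω => V ω = a) * Pr pr (fun ω => W ω = b) := by
  have hV : ∀ ω, V ω ∈ univ.image V := fun ω => mem_image_of_mem V (mem_univ ω)
  have hW : ∀ ω, W ω ∈ univ.image W := fun ω => mem_image_of_mem W (mem_univ ω)
  have marg_V : ∀ a, Pr pr (fun ω => V ω = a) = p a * ∑ b ∈ univ.image W, q b := fun a => by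
    rw [Pr_eq_sum_Pr_and pr W hW, mul_sum]
    exact sum_congr rfl fun b _ => hpq a b
  have marg_W : ∀ b, Pr pr (fun ω => W ω = b) = (∑ a ∈ univ.image V, p a) * q b := fun b => by
    rw [Pr_eq_sum_Pr_and pr V hV, sum_mul]
    exact sum_congr rfl fun a _ => (Pr_congr pr fun ω => and_comm).trans (hpq a b)
  have total : (∑ a ∈ univ.image V, p a) * ∑ b ∈ univ.image W, q b = 1 := by
    rw [← Pr_true pr hsum, Pr_eq_sum_Pr_and pr V hV, sum_mul]
    exact sum_congr rfl fun a _ =>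
      ((Pr_congr pr fun ω => Iff.of_eq (true_and _)).trans (marg_V a)).symm
  rw [hpq, marg_V, marg_W]
  linear_combination p a * q b * total.symm

end Pr

lemma Pr_and_eq_mul_of_indep_noise {Ω 𝒰 NXt NTt NYt : Type*} [Fintype Ω]
    (pr : Ω → ℝ) (hsum : ∑ ω, pr ω = 1)
    (NP : Ω → Bool) (NU : Ω → 𝒰) (NXn : Ω → NXt) (NTn : Ω → NTt) (NYn : Ω → NYt)
    (hindep : ∀ (a : Bool) (u : 𝒰) (nx : NXt) (nt : NTt) (ny : NYt),
      Pr pr (fun ω => NP ω = a ∧ NU ω = u ∧ NXn ω = nx ∧ NTn ω = nt ∧ NYn ω = ny)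
        = Pr pr (fun ω => NP ω = a) * Pr pr (fun ω => NU ω = u)
          * Pr pr (fun ω => NXn ω = nx) * Pr pr (fun ω => NTn ω = nt)
          * Pr pr (fun ω => NYn ω = ny))
    (g : 𝒰 → NXt → NYt → Prop) (h : Bool → NTt → Prop) :
    Pr pr (fun ω => g (NU ω) (NXn ω) (NYn ω) ∧ h (NP ω) (NTn ω))
      = Pr pr (fun ω => g (NU ω) (NXn ω) (NYn ω)) * Pr pr (fun ω => h (NP ω) (NTn ω)) := by
  refine Pr_and_comp_eq_mul pr (fun ω => (NU ω, NXn ω, NYn ω)) (fun ω => (NP ω, NTn ω))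
    (Pr_and_eq_mul_of_eq_mul pr hsum _ _
      (fun v => Pr pr (fun ω => NU ω = v.1) * Pr pr (fun ω => NXn ω = v.2.1)
        * Pr pr (fun ω => NYn ω = v.2.2))
      (fun w => Pr pr (fun ω => NP ω = w.1) * Pr pr (fun ω => NTn ω = w.2)) fun v w => ?_)
    (fun v => g v.1 v.2.1 v.2.2) (fun w => h w.1 w.2)
  rw [Pr_congr pr (B := fun ω => NP ω = w.1 ∧ NU ω = v.1 ∧ NXn ω = v.2.1 ∧ NTn ω = w.2
    ∧ NYn ω = v.2.2) fun ω => by simp only [Prod.ext_iff]; tauto, hindep]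
  ring

theorem stmt4_general
    {Ω 𝒰 𝒳 NXt NTt NYt : Type*} [Fintype Ω]
    (pr : Ω → ℝ) (hsum : ∑ ω, pr ω = 1)
    (NP : Ω → Bool) (NU : Ω → 𝒰) (NXn : Ω → NXt) (NTn : Ω → NTt) (NYn : Ω → NYt)
    (fX : 𝒰 → NXt → 𝒳) (fT : 𝒳 → NTt → Bool) (fY : 𝒳 → Bool → 𝒰 → NYt → Bool)
    (P : Ω → Bool) (hP : P = NP)
    (U : Ω → 𝒰) (hU : U = NU)
    (X : Ω → 𝒳) (hX : X = fun ω => fX (U ω) (NXn ω))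
    (T : Ω → Bool) (hT : T = fun ω => fT (X ω) (NTn ω) && P ω)
    (Y : Ω → Bool) (hY : Y = fun ω => fY (X ω) (T ω) (U ω) (NYn ω))
    (hindep : ∀ (a : Bool) (u : 𝒰) (nx : NXt) (nt : NTt) (ny : NYt),
      Pr pr (fun ω => NP ω = a ∧ NU ω = u ∧ NXn ω = nx ∧ NTn ω = nt ∧ NYn ω = ny)
        = Pr pr (fun ω => NP ω = a) * Pr pr (fun ω => NU ω = u)
          * Pr pr (fun ω => NXn ω = nx) * Pr pr (fun ω => NTn ω = nt)
          * Pr pr (fun ω => NYn ω = ny))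
    (x : 𝒳)
    (hx : 0 < Pr pr (fun ω => X ω = x))
    (hx0 : 0 < Pr pr (fun ω => X ω = x ∧ T ω = false)) :
    -- P(Y=1 | do(P:=1), X=x)
    cPr pr (fun ω => fY (X ω) (fT (X ω) (NTn ω) && true) (U ω) (NYn ω) = true)
        (fun ω => X ω = x)
      = cPr pr (fun ω => Y ω = true) (fun ω => X ω = x ∧ T ω = false)
        + (cPr pr (fun ω => fY (X ω) true (U ω) (NYn ω) = true) (fun ω => X ω = x)
            - cPr pr (fun ω => fY (X ω) false (U ω) (NYn ω) = true) (fun ω => X ω = x))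
          * cPr pr (fun ω => (fT (X ω) (NTn ω) && true) = true) (fun ω => X ω = x) := by
  subst hY hT hX hU hP
  beta_reduce at hx hx0 ⊢
  have indep := Pr_and_eq_mul_of_indep_noise pr hsum P U NXn NTn NYn hindep
  set px := Pr pr (fun ω => fX (U ω) (NXn ω) = x) with px_def
  set b : Bool → ℝ := fun t => Pr pr (fun ω => fX (U ω) (NXn ω) = x ∧ fY x t (U ω) (NYn ω) = true)
  set q := Pr pr (fun ω => fT x (NTn ω) = true)
  set c := Pr pr (fun ω => (fT x (NTn ω) && P ω) = false)
  have do_P : Pr pr (fun ω => fY (fX (U ω) (NXn ω)) (fT (fX (U ω) (NXn ω)) (NTn ω) && true)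
      (U ω) (NYn ω) = true ∧ fX (U ω) (NXn ω) = x) = b true * q + b false * (1 - q) := by
    rw [Pr_eq_Pr_and_add_Pr_and_not pr _ (fun ω => fT x (NTn ω) = true), ← Pr_not pr hsum]
    congr 1
    · exact (Pr_congr pr fun ω => by grind).trans
        (indep (fun u nx ny => fX u nx = x ∧ fY x true u ny = true) fun _ nt => fT x nt = true)
    · exact (Pr_congr pr fun ω => by grind).trans
        (indep (fun u nx ny => fX u nx = x ∧ fY x false u ny = true) fun _ nt => ¬fT x nt = true)
  have obs : Pr pr (fun ω => fY (fX (U ω) (NXn ω)) (fT (fX (U ω) (NXn ω)) (NTn ω) && P ω)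
      (U ω) (NYn ω) = true ∧ fX (U ω) (NXn ω) = x ∧ (fT (fX (U ω) (NXn ω)) (NTn ω) && P ω) = false)
      = b false * c :=
    (Pr_congr pr fun ω => by grind).trans
      (indep (fun u nx ny => fX u nx = x ∧ fY x false u ny = true)
        fun a nt => (fT x nt && a) = false)
  have obs_x : Pr pr (fun ω => fX (U ω) (NXn ω) = x
      ∧ (fT (fX (U ω) (NXn ω)) (NTn ω) && P ω) = false) = px * c :=
    (Pr_congr pr fun ω => by grind).trans
      (indep (fun u nx _ => fX u nx = x) fun a nt => (fT x nt && a) = false)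
  have do_T : ∀ t, Pr pr (fun ω => fY (fX (U ω) (NXn ω)) t (U ω) (NYn ω) = true
      ∧ fX (U ω) (NXn ω) = x) = b t := fun t => Pr_congr pr fun ω => by grind
  have compliance : Pr pr (fun ω => (fT (fX (U ω) (NXn ω)) (NTn ω) && true) = true
      ∧ fX (U ω) (NXn ω) = x) = px * q :=
    (Pr_congr pr fun ω => by grind).trans
      (indep (fun u nx _ => fX u nx = x) fun _ nt => fT x nt = true)
  have hc : c ≠ 0 := right_ne_zero_of_mul (obs_x ▸ hx0.ne')
  have hpx : px ≠ 0 := hx.ne'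
  simp only [cPr, ← px_def]
  rw [do_P, obs, obs_x, do_T, do_T, compliance]
  field_simp
  ring

/-- Lemma 1: In the non-compliance SCM,
P(Y = 1 | do(P := 1), X = x) = P(Y = 1 | X = x, T = 0) + ITE(x)·γ(x),
where ITE(x) = P(Y=1 | do(T:=1), X=x) − P(Y=1 | do(T:=0), X=x) and
γ(x) = P(T = 1 | do(P := 1), X = x).  Interventional quantities are obtained by
substituting the corresponding constant in the structural assignments. -/
theorem stmt4
    {Ω 𝒰 𝒳 NXt NTt NYt : Type*} [Fintype Ω]
    (pr : Ω → ℝ) (hpr : ∀ ω, 0 ≤ pr ω) (hsum : ∑ ω, pr ω = 1)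
    (NP : Ω → Bool) (NU : Ω → 𝒰) (NXn : Ω → NXt) (NTn : Ω → NTt) (NYn : Ω → NYt)
    (fX : 𝒰 → NXt → 𝒳) (fT : 𝒳 → NTt → Bool) (fY : 𝒳 → Bool → 𝒰 → NYt → Bool)
    (P : Ω → Bool) (hP : P = NP)
    (U : Ω → 𝒰) (hU : U = NU)
    (X : Ω → 𝒳) (hX : X = fun ω => fX (U ω) (NXn ω))
    (T : Ω → Bool) (hT : T = fun ω => fT (X ω) (NTn ω) && P ω)
    (Y : Ω → Bool) (hY : Y = fun ω => fY (X ω) (T ω) (U ω) (NYn ω))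
    (hindep : ∀ (a : Bool) (u : 𝒰) (nx : NXt) (nt : NTt) (ny : NYt),
      Pr pr (fun ω => NP ω = a ∧ NU ω = u ∧ NXn ω = nx ∧ NTn ω = nt ∧ NYn ω = ny)
        = Pr pr (fun ω => NP ω = a) * Pr pr (fun ω => NU ω = u)
          * Pr pr (fun ω => NXn ω = nx) * Pr pr (fun ω => NTn ω = nt)
          * Pr pr (fun ω => NYn ω = ny))
    (x : 𝒳)
    (hx : 0 < Pr pr (fun ω => X ω = x))
    (hx0 : 0 < Pr pr (fun ω => X ω = x ∧ T ω = false))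
    (hx1 : 0 < Pr pr (fun ω => X ω = x ∧ T ω = true)) :
    -- P(Y=1 | do(P:=1), X=x)
    cPr pr (fun ω => fY (X ω) (fT (X ω) (NTn ω) && true) (U ω) (NYn ω) = true)
        (fun ω => X ω = x)
      = cPr pr (fun ω => Y ω = true) (fun ω => X ω = x ∧ T ω = false)
        + (cPr pr (fun ω => fY (X ω) true (U ω) (NYn ω) = true) (fun ω => X ω = x)
            - cPr pr (fun ω => fY (X ω) false (U ω) (NYn ω) = true) (fun ω => X ω = x))
          * cPr pr (fun ω => (fT (X ω) (NTn ω) && true) = true) (fun ω => X ω = x) :=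
  stmt4_general pr hsum NP NU NXn NTn NYn fX fT fY P hP U hU X hX T hT Y hY hindep x hx hx0
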